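/- arXiv:2305.15267 — 4 statements merged into one kernel-verified Lean document; each statement's English description precedes it below -/
import Mathlib

section
/- With the setup below, the following change-of-variables identity for the Fisher divergence holds (as an equality of integrals of nonnegative functions, in [0,∞]): D_F(p_x ‖ p_0) = ∫_{ℝ^D} p_{x_j}(y) · (1/2) · ‖ J_T(T⁻¹(y))ᵀ ∇_y log( p_{x_j}(y)/p_j(y) ) ‖² dy, where D_F(p_x ‖ p_0) = ∫_{ℝ^D} p_x(x) · (1/2) · ‖∇_x log(p_x(x)/p_0(x))‖² dx. -/
/-!
The factor `|det J_T|` cancels in the density ratio, so `p_x / p_0 = (p_{x_j} / p_j) ∘ T`. The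
chain rule then turns the score of the ratio at `x` into `J_T(x)ᵀ` applied to the latent score
at `T x`, and the change of variables `y = T x` absorbs the remaining `|det J_T|` into `p_x`,
which becomes `p_{x_j}`.
-/

open MeasureTheory

theorem ContinuousLinearMap.det_comp {R M : Type*} [CommRing R] [TopologicalSpace M]
    [AddCommGroup M] [Module R M] (A B : M →L[R] M) : (A.comp B).det = A.det * B.det :=
  LinearMap.det_comp (A : M →ₗ[R] M) B

section Determinant

variable {𝕜 E : Type*} [NontriviallyNormedField 𝕜] [NormedAddCommGroup E] [NormedSpace 𝕜 E]
  {f g : E → E} {x : E}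

theorem det_fderiv_mul_det_fderiv_of_leftInverse (hgf : Function.LeftInverse g f)
    (hg : DifferentiableAt 𝕜 g (f x)) (hf : DifferentiableAt 𝕜 f x) :
    (fderiv 𝕜 g (f x)).det * (fderiv 𝕜 f x).det = 1 := by
  have hid : g ∘ f = id := funext hgf
  rw [← ContinuousLinearMap.det_comp, ← fderiv_comp x hg hf, hid, fderiv_id]
  exact LinearMap.det_id

end Determinant

section Gradient

variable {E F : Type*} [NormedAddCommGroup E] [InnerProductSpace ℝ E] [CompleteSpace E]
  [NormedAddCommGroup F] [InnerProductSpace ℝ F] [CompleteSpace F]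
  {φ : F → ℝ} {f : E → F} {x : E}

theorem HasGradientAt.comp_hasFDerivAt {φ' : F} {f' : E →L[ℝ] F}
    (hφ : HasGradientAt φ φ' (f x)) (hf : HasFDerivAt f f' x) :
    HasGradientAt (φ ∘ f) (ContinuousLinearMap.adjoint f' φ') x := by
  rw [hasGradientAt_iff_hasFDerivAt] at hφ ⊢
  have hdual : (InnerProductSpace.toDual ℝ F φ').comp f'
      = InnerProductSpace.toDual ℝ E (ContinuousLinearMap.adjoint f' φ') := by
    ext v
    simp [ContinuousLinearMap.adjoint_inner_left]
  exact hdual ▸ hφ.comp x hf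

/-- When `φ` is not differentiable at `f x`, neither is `φ ∘ f` at `x`, and both sides vanish. -/
theorem gradient_comp_of_inverse {g : F → E} (hgf : Function.LeftInverse g f)
    (hfg : Function.RightInverse g f) (hf : DifferentiableAt ℝ f x)
    (hg : DifferentiableAt ℝ g (f x)) :
    gradient (φ ∘ f) x = ContinuousLinearMap.adjoint (fderiv ℝ f x) (gradient φ (f x)) := by
  by_cases hφ : DifferentiableAt ℝ φ (f x)
  · exact (hφ.hasGradientAt.comp_hasFDerivAt hf.hasFDerivAt).gradient
  · have hφf : ¬DifferentiableAt ℝ (φ ∘ f) x := by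
      intro h
      have hcomp : (φ ∘ f) ∘ g = φ := funext fun y => congrArg φ (hfg y)
      rw [← hgf x] at h
      exact hφ (hcomp ▸ h.comp (f x) hg)
    rw [gradient_eq_zero_of_not_differentiableAt hφ, gradient_eq_zero_of_not_differentiableAt hφf,
      map_zero]

end Gradient

theorem lintegral_eq_lintegral_abs_det_fderiv_mul_comp {E : Type*} [NormedAddCommGroup E]
    [NormedSpace ℝ E] [FiniteDimensional ℝ E] [MeasurableSpace E] [BorelSpace E]
    (μ : Measure E) [μ.IsAddHaarMeasure] {f : E → E} (hf : Differentiable ℝ f)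
    (hbij : Function.Bijective f) (g : E → ENNReal) :
    ∫⁻ y, g y ∂μ = ∫⁻ x, ENNReal.ofReal |(fderiv ℝ f x).det| * g (f x) ∂μ := by
  have h := lintegral_image_eq_lintegral_abs_det_fderiv_mul μ MeasurableSet.univ
    (fun x _ => (hf x).hasFDerivAt.hasFDerivWithinAt) hbij.injective.injOn g
  rwa [Set.image_univ, hbij.surjective.range_eq, Measure.restrict_univ] at h

theorem stmt_2_general {D : ℕ}
    (T Tinv H : EuclideanSpace ℝ (Fin D) → EuclideanSpace ℝ (Fin D))
    (hT : ContDiff ℝ 2 T) (hTinv : ContDiff ℝ 2 Tinv)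
    (hTleft : Function.LeftInverse Tinv T) (hTright : Function.RightInverse Tinv T)
    (hH : ContDiff ℝ 2 H)
    (pu : EuclideanSpace ℝ (Fin D) → ℝ)
    (px : EuclideanSpace ℝ (Fin D) → ℝ)
    (p0 pj pxj : EuclideanSpace ℝ (Fin D) → ℝ)
    (hp0 : ∀ x, p0 x = pu (H (T x)) * |(fderiv ℝ (H ∘ T) x).det|)
    (hpj : ∀ y, pj y = pu (H y) * |(fderiv ℝ H y).det|)
    (hpxj : ∀ y, pxj y = px (Tinv y) * |(fderiv ℝ Tinv y).det|) :
    ∫⁻ x, ENNReal.ofReal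
        (px x * ((1 : ℝ) / 2) * ‖gradient (fun z => Real.log (px z / p0 z)) x‖ ^ 2) =
      ∫⁻ y, ENNReal.ofReal
        (pxj y * ((1 : ℝ) / 2) *
          ‖ContinuousLinearMap.adjoint (fderiv ℝ T (Tinv y))
              (gradient (fun z => Real.log (pxj z / pj z)) y)‖ ^ 2) := by
  have hTd : Differentiable ℝ T := hT.differentiable two_ne_zero
  have hTinvd : Differentiable ℝ Tinv := hTinv.differentiable two_ne_zero
  have hHd : Differentiable ℝ H := hH.differentiable two_ne_zero
  have hdet (x) : |(fderiv ℝ Tinv (T x)).det| * |(fderiv ℝ T x).det| = 1 := by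
    rw [← abs_mul, det_fderiv_mul_det_fderiv_of_leftInverse hTleft (hTinvd _) (hTd x), abs_one]
  have hratio : (fun z => Real.log (px z / p0 z)) = (fun z => Real.log (pxj z / pj z)) ∘ T := by
    funext z
    rw [Function.comp_apply, hp0, hpxj, hpj, hTleft, fderiv_comp z (hHd _) (hTd z),
      ContinuousLinearMap.det_comp, abs_mul, eq_inv_of_mul_eq_one_left (hdet z)]
    congr 1
    ring
  refine Eq.trans ?_ (lintegral_eq_lintegral_abs_det_fderiv_mul_comp volume hTd
    ⟨hTleft.injective, hTright.surjective⟩ _).symm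
  refine lintegral_congr fun x => ?_
  rw [← ENNReal.ofReal_mul (abs_nonneg _), hratio,
    gradient_comp_of_inverse hTleft hTright (hTd x) (hTinvd _), hpxj, hTleft x]
  congr 1
  linear_combination (-(px x * (1 / 2) * ‖ContinuousLinearMap.adjoint (fderiv ℝ T x)
    (gradient (fun z => Real.log (pxj z / pj z)) (T x))‖ ^ 2)) * hdet x

/-- **Lemma A4.** With `T = g_j ∘ ⋯ ∘ g_1` and `H = g_L ∘ ⋯ ∘ g_{j+1}` C²
diffeomorphisms of ℝ^D, prior density `p_u`, model densities
`p_0(x) = p_u(H(T x))·|det J_{H∘T}(x)|` and `p_j(y) = p_u(H y)·|det J_H(y)|`,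
data density `p_x` and pushforward density `p_{x_j}(y) = p_x(T⁻¹ y)·|det J_{T⁻¹}(y)|`,
the Fisher divergence satisfies the change-of-variables identity (in `[0,∞]`):
`D_F(p_x ‖ p_0) = ∫ p_{x_j}(y) · ½ ‖J_T(T⁻¹ y)ᵀ ∇_y log(p_{x_j}(y)/p_j(y))‖² dy`. -/
theorem stmt_2 {D : ℕ} (hD : 1 ≤ D)
    (T Tinv H Hinv : EuclideanSpace ℝ (Fin D) → EuclideanSpace ℝ (Fin D))
    (hT : ContDiff ℝ 2 T) (hTinv : ContDiff ℝ 2 Tinv)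
    (hTleft : Function.LeftInverse Tinv T) (hTright : Function.RightInverse Tinv T)
    (hH : ContDiff ℝ 2 H) (hHinv : ContDiff ℝ 2 Hinv)
    (hHleft : Function.LeftInverse Hinv H) (hHright : Function.RightInverse Hinv H)
    (pu : EuclideanSpace ℝ (Fin D) → ℝ)
    (hpu_pos : ∀ u, 0 < pu u) (hpu_smooth : ContDiff ℝ 1 pu)
    (hpu_int : ∫ u, pu u = 1)
    (px : EuclideanSpace ℝ (Fin D) → ℝ)
    (hpx_pos : ∀ x, 0 < px x) (hpx_smooth : ContDiff ℝ 1 px)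
    (hpx_int : ∫ x, px x = 1)
    (p0 pj pxj : EuclideanSpace ℝ (Fin D) → ℝ)
    (hp0 : ∀ x, p0 x = pu (H (T x)) * |(fderiv ℝ (H ∘ T) x).det|)
    (hpj : ∀ y, pj y = pu (H y) * |(fderiv ℝ H y).det|)
    (hpxj : ∀ y, pxj y = px (Tinv y) * |(fderiv ℝ Tinv y).det|) :
    ∫⁻ x, ENNReal.ofReal
        (px x * ((1 : ℝ) / 2) * ‖gradient (fun z => Real.log (px z / p0 z)) x‖ ^ 2) =
      ∫⁻ y, ENNReal.ofReal
        (pxj y * ((1 : ℝ) / 2) *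
          ‖ContinuousLinearMap.adjoint (fderiv ℝ T (Tinv y))
              (gradient (fun z => Real.log (pxj z / pj z)) y)‖ ^ 2) :=
  stmt_2_general T Tinv H hT hTinv hTleft hTright hH pu px p0 pj pxj hp0 hpj hpxj
end

section
/- With the setup below, D_F(p_{x_j} ‖ p_j) = 0 if and only if D_F(p_x ‖ p_0) = 0; that is, ∫_{ℝ^D} p_{x_j}(y) · (1/2) · ‖∇_y log(p_{x_j}(y)/p_j(y))‖² dy = 0 holds exactly when ∫_{ℝ^D} p_x(x) · (1/2) · ‖∇_x log(p_x(x)/p_0(x))‖² dx = 0. -/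
/-!
Each Fisher integrand is a strictly positive density times `‖∇ log (p / q)‖²`, so each integral
vanishes iff the score difference `∇ log (p / q)` vanishes almost everywhere. The densities `p_x`
and `p_0` are the pullbacks along `T` of `p_{x_j}` and `p_j`, and the common Jacobian factor
`|det J_T|` cancels in the ratio, so `log (p_x / p_0) = log (p_{x_j} / p_j) ∘ T`.
As `T` is a diffeomorphism, the gradient of `φ ∘ T` vanishes at `x` iff that of `φ` vanishes at
`T x`, and `T` and `T⁻¹` map Lebesgue-null sets to null sets.
-/

open MeasureTheory Function

section InverseFunctions

variable {E F G : Type*} [NormedAddCommGroup E] [NormedSpace ℝ E] [NormedAddCommGroup F]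
  [NormedSpace ℝ F] [NormedAddCommGroup G] [NormedSpace ℝ G] {T : E → F} {S : F → E}

theorem Function.LeftInverse.fderiv_comp_fderiv (h : LeftInverse S T) {x : E}
    (hS : DifferentiableAt ℝ S (T x)) (hT : DifferentiableAt ℝ T x) :
    (fderiv ℝ S (T x)).comp (fderiv ℝ T x) = ContinuousLinearMap.id ℝ E := by
  rw [← fderiv_comp x hS hT, h.comp_eq_id, fderiv_id]

theorem fderiv_comp_eq_zero_iff_of_leftInverse (hl : LeftInverse S T) (hr : RightInverse S T)
    (hT : Differentiable ℝ T) (hS : Differentiable ℝ S) (φ : F → G) (x : E) :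
    fderiv ℝ (φ ∘ T) x = 0 ↔ fderiv ℝ φ (T x) = 0 := by
  by_cases hφ : DifferentiableAt ℝ φ (T x)
  · have hTS : (fderiv ℝ T x).comp (fderiv ℝ S (T x)) = ContinuousLinearMap.id ℝ F := by
      simpa only [hl x] using LeftInverse.fderiv_comp_fderiv hr (hT (S (T x))) (hS (T x))
    rw [fderiv_comp x hφ (hT x)]
    refine ⟨fun h => ?_, fun h => by rw [h, ContinuousLinearMap.zero_comp]⟩
    rw [← ContinuousLinearMap.comp_id (fderiv ℝ φ (T x)), ← hTS, ← ContinuousLinearMap.comp_assoc,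
      h, ContinuousLinearMap.zero_comp]
  · -- both derivatives take the junk value `0`
    have hφT : ¬DifferentiableAt ℝ (φ ∘ T) x := by
      intro h
      rw [← hl x] at h
      exact hφ (by simpa only [comp_assoc, hr.comp_eq_id, comp_id] using h.comp (T x) (hS (T x)))
    simp only [fderiv_zero_of_not_differentiableAt hφ, fderiv_zero_of_not_differentiableAt hφT]

end InverseFunctions

theorem gradient_comp_eq_zero_iff_of_leftInverse {E F : Type*} [NormedAddCommGroup E]
    [InnerProductSpace ℝ E] [CompleteSpace E] [NormedAddCommGroup F] [InnerProductSpace ℝ F]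
    [CompleteSpace F] {T : E → F} {S : F → E}
    (hl : LeftInverse S T) (hr : RightInverse S T) (hT : Differentiable ℝ T)
    (hS : Differentiable ℝ S) (φ : F → ℝ) (x : E) :
    gradient (φ ∘ T) x = 0 ↔ gradient φ (T x) = 0 := by
  simp only [gradient, LinearIsometryEquiv.map_eq_zero_iff]
  exact fderiv_comp_eq_zero_iff_of_leftInverse hl hr hT hS φ x

theorem measurable_gradient {E : Type*} [NormedAddCommGroup E] [InnerProductSpace ℝ E]
    [CompleteSpace E] [MeasurableSpace E] [BorelSpace E] (φ : E → ℝ) :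
    Measurable (gradient φ) :=
  (InnerProductSpace.toDual ℝ E).symm.continuous.measurable.comp (measurable_fderiv ℝ φ)

theorem lintegral_ofReal_mul_half_mul_norm_sq_eq_zero_iff {E F : Type*} [MeasurableSpace E]
    {μ : Measure E} [NormedAddCommGroup F] [MeasurableSpace F] [OpensMeasurableSpace F]
    {p : E → ℝ} {v : E → F} (hp : ∀ x, 0 < p x) (hpm : Measurable p) (hv : Measurable v) :
    ∫⁻ x, ENNReal.ofReal (p x * ((1 : ℝ) / 2) * ‖v x‖ ^ 2) ∂μ = 0 ↔ ∀ᵐ x ∂μ, v x = 0 := by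
  rw [lintegral_eq_zero_iff (by fun_prop)]
  refine Filter.eventually_congr (Filter.Eventually.of_forall fun x => ?_)
  have hpx : 0 < p x * ((1 : ℝ) / 2) := by linarith [hp x]
  rw [Pi.zero_apply, ENNReal.ofReal_eq_zero, ← not_lt, mul_pos_iff_of_pos_left hpx, not_lt,
    sq_nonpos_iff, norm_eq_zero]

section AddHaar

variable {E : Type*} [NormedAddCommGroup E] [NormedSpace ℝ E] [FiniteDimensional ℝ E]
  [MeasurableSpace E] [BorelSpace E] (μ : Measure E) [μ.IsAddHaarMeasure]

theorem ae_comp_iff_of_leftInverse {T S : E → E} (hl : LeftInverse S T) (hr : RightInverse S T)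
    (hT : Differentiable ℝ T) (hS : Differentiable ℝ S) (P : E → Prop) :
    (∀ᵐ y ∂μ, P y) ↔ ∀ᵐ x ∂μ, P (T x) := by
  have hST : S '' {y | ¬P y} = {x | ¬P (T x)} := Set.image_eq_preimage_of_inverse hr hl ▸ rfl
  have hTS : T '' {x | ¬P (T x)} = {y | ¬P y} := by
    rw [Set.image_eq_preimage_of_inverse hl hr]
    ext y; simp only [Set.mem_preimage, Set.mem_ofPred_eq, hr y]
  simp only [ae_iff]
  exact ⟨fun h => hST ▸ addHaar_image_eq_zero_of_differentiableOn_of_addHaar_eq_zero μ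
      hS.differentiableOn h,
    fun h => hTS ▸ addHaar_image_eq_zero_of_differentiableOn_of_addHaar_eq_zero μ
      hT.differentiableOn h⟩

end AddHaar

section Densities

variable {E : Type*} [NormedAddCommGroup E] [NormedSpace ℝ E] {T S H : E → E} {x : E}

/-- For a diffeomorphism `g`, the Lebesgue density of the pullback along `g` of the measure with
density `p`; the model densities `p_0`, `p_j` and the pushforward `p_{x_j}` are all of this form. -/
noncomputable def pullbackDensity (p : E → ℝ) (g : E → E) (x : E) : ℝ :=
  p (g x) * |(fderiv ℝ g x).det|

theorem pullbackDensity_id (p : E → ℝ) : pullbackDensity p id = p := by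
  ext x
  simp only [pullbackDensity, fderiv_id, id_eq, ContinuousLinearMap.det, ContinuousLinearMap.coe_id,
    LinearMap.det_id, abs_one, mul_one]

theorem det_fderiv_comp (hH : DifferentiableAt ℝ H (T x)) (hT : DifferentiableAt ℝ T x) :
    (fderiv ℝ (H ∘ T) x).det = (fderiv ℝ H (T x)).det * (fderiv ℝ T x).det := by
  rw [fderiv_comp x hH hT, ContinuousLinearMap.det, ContinuousLinearMap.toLinearMap_comp,
    LinearMap.det_comp]

theorem pullbackDensity_comp (hH : DifferentiableAt ℝ H (T x)) (hT : DifferentiableAt ℝ T x)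
    (p : E → ℝ) : pullbackDensity p (H ∘ T) x = pullbackDensity (pullbackDensity p H) T x := by
  simp only [pullbackDensity, comp_apply, det_fderiv_comp hH hT, abs_mul, mul_assoc]

theorem Function.LeftInverse.det_fderiv_mul_det_fderiv (h : LeftInverse S T)
    (hS : DifferentiableAt ℝ S (T x)) (hT : DifferentiableAt ℝ T x) :
    (fderiv ℝ S (T x)).det * (fderiv ℝ T x).det = 1 := by
  rw [← det_fderiv_comp hS hT, h.comp_eq_id, fderiv_id, ContinuousLinearMap.det,
    ContinuousLinearMap.coe_id, LinearMap.det_id]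

theorem Function.LeftInverse.pullbackDensity_pullbackDensity (h : LeftInverse S T)
    (hS : DifferentiableAt ℝ S (T x)) (hT : DifferentiableAt ℝ T x) (p : E → ℝ) :
    pullbackDensity (pullbackDensity p S) T x = p x := by
  rw [← pullbackDensity_comp hS hT, h.comp_eq_id, pullbackDensity_id]

theorem pullbackDensity_div_pullbackDensity (hT : (fderiv ℝ T x).det ≠ 0) (p q : E → ℝ) :
    pullbackDensity p T x / pullbackDensity q T x = p (T x) / q (T x) :=
  mul_div_mul_right _ _ (abs_ne_zero.2 hT)

theorem pullbackDensity_pos {p : E → ℝ} (hp : ∀ y, 0 < p y) (hT : (fderiv ℝ T x).det ≠ 0) :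
    0 < pullbackDensity p T x :=
  mul_pos (hp (T x)) (abs_pos.2 hT)

theorem Measurable.pullbackDensity [FiniteDimensional ℝ E] [MeasurableSpace E] [BorelSpace E]
    {p : E → ℝ} (hp : Measurable p) (hT : Measurable T) : Measurable (pullbackDensity p T) :=
  (hp.comp hT).mul (ContinuousLinearMap.continuous_det.measurable.comp
    (measurable_fderiv ℝ T)).abs

end Densities

theorem stmt_3_general {D : ℕ}
    (T Tinv H : EuclideanSpace ℝ (Fin D) → EuclideanSpace ℝ (Fin D))
    (hT : ContDiff ℝ 2 T) (hTinv : ContDiff ℝ 2 Tinv)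
    (hTleft : Function.LeftInverse Tinv T) (hTright : Function.RightInverse Tinv T)
    (hH : ContDiff ℝ 2 H)
    (pu : EuclideanSpace ℝ (Fin D) → ℝ)
    (px : EuclideanSpace ℝ (Fin D) → ℝ)
    (hpx_pos : ∀ x, 0 < px x) (hpx_smooth : ContDiff ℝ 1 px)
    (p0 pj pxj : EuclideanSpace ℝ (Fin D) → ℝ)
    (hp0 : ∀ x, p0 x = pu (H (T x)) * |(fderiv ℝ (H ∘ T) x).det|)
    (hpj : ∀ y, pj y = pu (H y) * |(fderiv ℝ H y).det|)
    (hpxj : ∀ y, pxj y = px (Tinv y) * |(fderiv ℝ Tinv y).det|) :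
    (∫⁻ y, ENNReal.ofReal
        (pxj y * ((1 : ℝ) / 2) * ‖gradient (fun z => Real.log (pxj z / pj z)) y‖ ^ 2) = 0) ↔
      (∫⁻ x, ENNReal.ofReal
        (px x * ((1 : ℝ) / 2) * ‖gradient (fun z => Real.log (px z / p0 z)) x‖ ^ 2) = 0) := by
  have hTd := hT.differentiable two_ne_zero
  have hTinvd := hTinv.differentiable two_ne_zero
  have hHd := hH.differentiable two_ne_zero
  have hdetT (x) : (fderiv ℝ T x).det ≠ 0 :=
    right_ne_zero_of_mul_eq_one (hTleft.det_fderiv_mul_det_fderiv (hTinvd _) (hTd x))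
  have hdetTinv (y) : (fderiv ℝ Tinv y).det ≠ 0 :=
    right_ne_zero_of_mul_eq_one (LeftInverse.det_fderiv_mul_det_fderiv hTright (hTd _) (hTinvd y))
  obtain rfl : pxj = pullbackDensity px Tinv := funext hpxj
  obtain rfl : pj = pullbackDensity pu H := funext hpj
  obtain rfl : p0 = pullbackDensity pu (H ∘ T) := funext hp0
  have hlog : (fun z => Real.log (px z / pullbackDensity pu (H ∘ T) z)) =
      (fun y => Real.log (pullbackDensity px Tinv y / pullbackDensity pu H y)) ∘ T := by
    funext x
    rw [comp_apply, ← pullbackDensity_div_pullbackDensity (hdetT x),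
      hTleft.pullbackDensity_pullbackDensity (hTinvd _) (hTd x),
      pullbackDensity_comp (hHd _) (hTd x)]
  have hpx_meas := hpx_smooth.continuous.measurable
  rw [lintegral_ofReal_mul_half_mul_norm_sq_eq_zero_iff
      (fun y => pullbackDensity_pos hpx_pos (hdetTinv y))
      (hpx_meas.pullbackDensity hTinv.continuous.measurable) (measurable_gradient _),
    lintegral_ofReal_mul_half_mul_norm_sq_eq_zero_iff hpx_pos hpx_meas (measurable_gradient _),
    hlog]
  simp_rw [gradient_comp_eq_zero_iff_of_leftInverse hTleft hTright hTd hTinvd]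
  exact ae_comp_iff_of_leftInverse volume hTleft hTright hTd hTinvd _

/-- **Proposition 4.1 (MaP).** With `T = g_j ∘ ⋯ ∘ g_1` and `H = g_L ∘ ⋯ ∘ g_{j+1}` C²
diffeomorphisms of ℝ^D, prior density `p_u`, model densities
`p_0(x) = p_u(H(T x))·|det J_{H∘T}(x)|` and `p_j(y) = p_u(H y)·|det J_H(y)|`,
data density `p_x` and pushforward density `p_{x_j}(y) = p_x(T⁻¹ y)·|det J_{T⁻¹}(y)|`,
the Fisher divergence `D_F(p_{x_j} ‖ p_j)` vanishes iff `D_F(p_x ‖ p_0)` vanishes. -/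
theorem stmt_3 {D : ℕ} (hD : 1 ≤ D)
    (T Tinv H Hinv : EuclideanSpace ℝ (Fin D) → EuclideanSpace ℝ (Fin D))
    (hT : ContDiff ℝ 2 T) (hTinv : ContDiff ℝ 2 Tinv)
    (hTleft : Function.LeftInverse Tinv T) (hTright : Function.RightInverse Tinv T)
    (hH : ContDiff ℝ 2 H) (hHinv : ContDiff ℝ 2 Hinv)
    (hHleft : Function.LeftInverse Hinv H) (hHright : Function.RightInverse Hinv H)
    (pu : EuclideanSpace ℝ (Fin D) → ℝ)
    (hpu_pos : ∀ u, 0 < pu u) (hpu_smooth : ContDiff ℝ 1 pu)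
    (hpu_int : ∫ u, pu u = 1)
    (px : EuclideanSpace ℝ (Fin D) → ℝ)
    (hpx_pos : ∀ x, 0 < px x) (hpx_smooth : ContDiff ℝ 1 px)
    (hpx_int : ∫ x, px x = 1)
    (p0 pj pxj : EuclideanSpace ℝ (Fin D) → ℝ)
    (hp0 : ∀ x, p0 x = pu (H (T x)) * |(fderiv ℝ (H ∘ T) x).det|)
    (hpj : ∀ y, pj y = pu (H y) * |(fderiv ℝ H y).det|)
    (hpxj : ∀ y, pxj y = px (Tinv y) * |(fderiv ℝ Tinv y).det|) :
    (∫⁻ y, ENNReal.ofReal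
        (pxj y * ((1 : ℝ) / 2) * ‖gradient (fun z => Real.log (pxj z / pj z)) y‖ ^ 2) = 0) ↔
      (∫⁻ x, ENNReal.ofReal
        (px x * ((1 : ℝ) / 2) * ‖gradient (fun z => Real.log (px z / p0 z)) x‖ ^ 2) = 0) :=
  stmt_3_general T Tinv H hT hTinv hTleft hTright hH pu px hpx_pos hpx_smooth p0 pj pxj hp0 hpj hpxj
end

section
/- Fix integers D, p ≥ 1, a set Θ ⊆ ℝ^p, a point x ∈ ℝ^D, and nonnegative reals L1(x), L2(x), L3(x). Let s : ℝ^D × Θ → ℝ^D be such that for each θ ∈ Θ the map y ↦ s(y;θ) is differentiable, with Jacobian matrix ∂s(x;θ) at x whose i-th column is the partial derivative ∂_i s(x;θ). Define f(x;θ) = (1/2)·‖s(x;θ)‖² + tr(∂s(x;θ)). Assume that for all θ, θ1, θ2 ∈ Θ and all i ∈ {1,…,D}: ‖s(x;θ)‖ ≤ L1(x), ‖s(x;θ1) − s(x;θ2)‖ ≤ L2(x)·‖θ1 − θ2‖, and ‖∂_i s(x;θ1) − ∂_i s(x;θ2)‖ ≤ L3(x)·‖θ1 − θ2‖. Then for all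 θ1, θ2 ∈ Θ: |f(x;θ1) − f(x;θ2)| ≤ (L1(x)·L2(x) + D·√D·L3(x))·‖θ1 − θ2‖. -/
/-!
Write `f θ = ½‖s θ x‖² + tr A_θ`. The quadratic parts differ by `½(‖a‖ + ‖b‖)(‖a‖ - ‖b‖)`,
which is at most `L1 · L2 ‖θ1 - θ2‖`. The trace of `A_θ1 - A_θ2` is the sum of its `D`
diagonal entries `⟪eᵢ, (A_θ1 - A_θ2) eᵢ⟫`, each bounded by the norm of the `i`-th column,
hence by `L3 ‖θ1 - θ2‖`; finally `D ≤ D √D`.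
-/

theorem LinearMap.norm_trace_le_sum_norm_apply {𝕜 E ι : Type*} [RCLike 𝕜] [Fintype ι]
    [NormedAddCommGroup E] [InnerProductSpace 𝕜 E] (T : E →ₗ[𝕜] E) (b : OrthonormalBasis ι 𝕜 E) :
    ‖T.trace 𝕜 E‖ ≤ ∑ i, ‖T (b i)‖ := by
  rw [T.trace_eq_sum_inner b]
  refine (norm_sum_le _ _).trans (Finset.sum_le_sum fun i _ => ?_)
  simpa [b.orthonormal.1 i] using norm_inner_le_norm (𝕜 := 𝕜) (b i) (T (b i))

theorem abs_half_sq_norm_sub_half_sq_norm_le {E : Type*} [SeminormedAddCommGroup E] {a b : E}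
    {M : ℝ} (ha : ‖a‖ ≤ M) (hb : ‖b‖ ≤ M) :
    |1 / 2 * ‖a‖ ^ 2 - 1 / 2 * ‖b‖ ^ 2| ≤ M * ‖a - b‖ := by
  have hfactor : 1 / 2 * ‖a‖ ^ 2 - 1 / 2 * ‖b‖ ^ 2 = (‖a‖ + ‖b‖) / 2 * (‖a‖ - ‖b‖) := by ring
  rw [hfactor, abs_mul, abs_of_nonneg (by positivity)]
  exact mul_le_mul (by linarith) (abs_norm_sub_norm_le a b) (abs_nonneg _)
    ((norm_nonneg a).trans ha)

theorem Real.natCast_le_mul_sqrt (n : ℕ) : (n : ℝ) ≤ n * √n := by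
  rcases Nat.eq_zero_or_pos n with rfl | hn
  · simp
  · exact le_mul_of_one_le_right (Nat.cast_nonneg n) (Real.one_le_sqrt.mpr (by exact_mod_cast hn))

theorem LinearMap.norm_trace_le_card_mul {𝕜 E ι : Type*} [RCLike 𝕜] [Fintype ι]
    [NormedAddCommGroup E] [InnerProductSpace 𝕜 E] (T : E →ₗ[𝕜] E) (b : OrthonormalBasis ι 𝕜 E)
    {c : ℝ} (hc : ∀ i, ‖T (b i)‖ ≤ c) :
    ‖T.trace 𝕜 E‖ ≤ Fintype.card ι * c := by
  simpa using (T.norm_trace_le_sum_norm_apply b).trans (Finset.sum_le_sum fun i _ => hc i)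

theorem stmt_4_general {D p : ℕ}
    (Θ : Set (EuclideanSpace ℝ (Fin p)))
    (x : EuclideanSpace ℝ (Fin D))
    (L1 L2 L3 : ℝ) (hL1 : 0 ≤ L1) (hL3 : 0 ≤ L3)
    (s : EuclideanSpace ℝ (Fin p) → EuclideanSpace ℝ (Fin D) → EuclideanSpace ℝ (Fin D))
    (f : EuclideanSpace ℝ (Fin p) → ℝ)
    (hf : ∀ θ, f θ = (1 / 2) * ‖s θ x‖ ^ 2 +
      LinearMap.trace ℝ (EuclideanSpace ℝ (Fin D)) (fderiv ℝ (s θ) x).toLinearMap)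
    (hb1 : ∀ θ ∈ Θ, ‖s θ x‖ ≤ L1)
    (hb2 : ∀ θ1 ∈ Θ, ∀ θ2 ∈ Θ, ‖s θ1 x - s θ2 x‖ ≤ L2 * ‖θ1 - θ2‖)
    (hb3 : ∀ θ1 ∈ Θ, ∀ θ2 ∈ Θ, ∀ i : Fin D,
      ‖fderiv ℝ (s θ1) x (EuclideanSpace.single i 1) -
        fderiv ℝ (s θ2) x (EuclideanSpace.single i 1)‖ ≤ L3 * ‖θ1 - θ2‖) :
    ∀ θ1 ∈ Θ, ∀ θ2 ∈ Θ,
      |f θ1 - f θ2| ≤ (L1 * L2 + D * Real.sqrt D * L3) * ‖θ1 - θ2‖ := by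
  intro θ1 h1 θ2 h2
  have hsq : |1 / 2 * ‖s θ1 x‖ ^ 2 - 1 / 2 * ‖s θ2 x‖ ^ 2| ≤ L1 * (L2 * ‖θ1 - θ2‖) :=
    (abs_half_sq_norm_sub_half_sq_norm_le (hb1 θ1 h1) (hb1 θ2 h2)).trans
      (mul_le_mul_of_nonneg_left (hb2 θ1 h1 θ2 h2) hL1)
  have htr : ‖LinearMap.trace ℝ (EuclideanSpace ℝ (Fin D))
      (fderiv ℝ (s θ1) x - fderiv ℝ (s θ2) x).toLinearMap‖ ≤ D * (L3 * ‖θ1 - θ2‖) := by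
    have h := LinearMap.norm_trace_le_card_mul
      (fderiv ℝ (s θ1) x - fderiv ℝ (s θ2) x).toLinearMap (EuclideanSpace.basisFun (Fin D) ℝ)
      (c := L3 * ‖θ1 - θ2‖) fun i => by
        simpa only [EuclideanSpace.basisFun_apply, ContinuousLinearMap.coe_coe, sub_apply]
          using hb3 θ1 h1 θ2 h2 i
    rwa [Fintype.card_fin] at h
  have hsqrt : (D : ℝ) * (L3 * ‖θ1 - θ2‖) ≤ D * √D * (L3 * ‖θ1 - θ2‖) :=
    mul_le_mul_of_nonneg_right (Real.natCast_le_mul_sqrt D) (by positivity)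
  rw [ContinuousLinearMap.toLinearMap_sub, map_sub, Real.norm_eq_abs] at htr
  rw [hf θ1, hf θ2, add_sub_add_comm]
  calc _ ≤ L1 * (L2 * ‖θ1 - θ2‖) + D * √D * (L3 * ‖θ1 - θ2‖) :=
        (abs_add_le _ _).trans (add_le_add hsq (htr.trans hsqrt))
    _ = (L1 * L2 + D * √D * L3) * ‖θ1 - θ2‖ := by ring

/-- **Lemma A1 (Lipschitzness of the pointwise score-matching objective).**
If, at a fixed point `x`, the score `s(x;θ)` is bounded by `L1`, Lipschitz in `θ`
with constant `L2`, and each column `∂_i s(x;θ)` of its Jacobian is Lipschitz in `θ`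
with constant `L3`, then `f(x;θ) = ½‖s(x;θ)‖² + tr(∂s(x;θ))` is Lipschitz in `θ`
with constant `L1·L2 + D·√D·L3`. -/
theorem stmt_4 {D p : ℕ} (hD : 1 ≤ D) (hp : 1 ≤ p)
    (Θ : Set (EuclideanSpace ℝ (Fin p)))
    (x : EuclideanSpace ℝ (Fin D))
    (L1 L2 L3 : ℝ) (hL1 : 0 ≤ L1) (hL2 : 0 ≤ L2) (hL3 : 0 ≤ L3)
    (s : EuclideanSpace ℝ (Fin p) → EuclideanSpace ℝ (Fin D) → EuclideanSpace ℝ (Fin D))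
    (hdiff : ∀ θ ∈ Θ, Differentiable ℝ (s θ))
    (f : EuclideanSpace ℝ (Fin p) → ℝ)
    (hf : ∀ θ, f θ = (1 / 2) * ‖s θ x‖ ^ 2 +
      LinearMap.trace ℝ (EuclideanSpace ℝ (Fin D)) (fderiv ℝ (s θ) x).toLinearMap)
    (hb1 : ∀ θ ∈ Θ, ‖s θ x‖ ≤ L1)
    (hb2 : ∀ θ1 ∈ Θ, ∀ θ2 ∈ Θ, ‖s θ1 x - s θ2 x‖ ≤ L2 * ‖θ1 - θ2‖)
    (hb3 : ∀ θ1 ∈ Θ, ∀ θ2 ∈ Θ, ∀ i : Fin D,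
      ‖fderiv ℝ (s θ1) x (EuclideanSpace.single i 1) -
        fderiv ℝ (s θ2) x (EuclideanSpace.single i 1)‖ ≤ L3 * ‖θ1 - θ2‖) :
    ∀ θ1 ∈ Θ, ∀ θ2 ∈ Θ,
      |f θ1 - f θ2| ≤ (L1 * L2 + D * Real.sqrt D * L3) * ‖θ1 - θ2‖ :=
  stmt_4_general Θ x L1 L2 L3 hL1 hL3 s f hf hb1 hb2 hb3
end

section
/- Fix integers D, p ≥ 1, a set Θ ⊆ ℝ^p, and a point x ∈ ℝ^D. For each θ ∈ Θ let g(·;θ) : ℝ^D → ℝ^D be three times continuously differentiable with Jacobian J_g(y;θ) invertible for all y, and let s_u : ℝ^D → ℝ^D be continuously differentiable with total derivative Ds_u. Define v(y;θ) ∈ ℝ^D by v_i(y;θ) = tr(J_g(y;θ)⁻¹ · ∂_i J_g(y;θ)), the score s(y;θ) = J_g(y;θ)ᵀ·s_u(g(y;θ)) + v(y;θ), and f(y;θ) = (1/2)·‖s(y;θ)‖² + tr(∂s(y;θ)/∂y). Assume there are functions l1, l2, l3, l1', l2', r0, r1, r2, r3, r1', r2' : ℝ^D → [0,∞) and constants t1,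 t2, t3, t4 ≥ 0 such that for all θ, θ1, θ2 ∈ Θ, all i, j ∈ {1,…,D}, all y ∈ ℝ^D, and all u, u1, u2 ∈ ℝ^D: ‖J_g(y;θ)‖₂ ≤ l1(y), ‖∂_i J_g(y;θ)‖₂ ≤ l2(y), ‖∂_i ∂_j J_g(y;θ)‖₂ ≤ l3(y); ‖g(y;θ1) − g(y;θ2)‖ ≤ r0(y)·‖θ1−θ2‖, ‖J_g(y;θ1) − J_g(y;θ2)‖₂ ≤ r1(y)·‖θ1−θ2‖, ‖∂_i J_g(y;θ1) − ∂_i J_g(y;θ2)‖₂ ≤ r2(y)·‖θ1−θ2‖, ‖∂_i ∂_j J_g(y;θ1) − ∂_i ∂_j J_g(y;θ2)‖₂ ≤ r3(y)·‖θ1−θ2‖; ‖J_g(y;θ)⁻¹‖₂ ≤ l1'(y), ‖∂_i (J_g⁻¹)(y;θ)‖₂ ≤ l2'(y), ‖J_g(y;θ1)⁻¹ − J_g(y;θ2)⁻¹‖₂ ≤ r1'(y)·‖θ1−θ2‖, ‖∂_i (J_g⁻¹)(y;θ1) − ∂_i (J_g⁻¹)(y;θ2)‖₂ ≤ r2'(y)·‖θ1−θ2‖;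 ‖s_u(u)‖ ≤ t1, ‖Ds_u(u)‖₂ ≤ t2, ‖s_u(u1) − s_u(u2)‖ ≤ t3·‖u1−u2‖, and ‖Ds_u(u1) − Ds_u(u2)‖₂ ≤ t4·‖u1−u2‖. Then the map θ ↦ f(x;θ) is Lipschitz continuous on Θ: there exists L(x) ≥ 0 such that |f(x;θ1) − f(x;θ2)| ≤ L(x)·‖θ1 − θ2‖ for all θ1, θ2 ∈ Θ, and L(x) can be taken to be a finite sum of products of the bound functions above evaluated at x, with coefficients depending only on D. -/
/-!
The objective is `½‖s‖² + ∑ᵢ ⟪eᵢ, ∂ᵢs⟫`, and both the score `s(x;θ)` and its partial derivatives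
`∂ᵢs(x;θ)` are obtained from the quantities controlled by the hypotheses (`J_g`, `∂ᵢJ_g`,
`∂ᵢ∂ⱼJ_g`, `J_g⁻¹`, `∂ᵢ(J_g⁻¹)`, `s_u ∘ g`, `Ds_u ∘ g`) by sums and by continuous bilinear
operations: composition, application, adjoint, trace, scalar and inner products. A continuous
bilinear image of two families that are bounded and Lipschitz in `θ` is again bounded and
Lipschitz in `θ`, which gives the Lipschitz bound on the objective.
-/

/-- The Jacobian `J_g(y;θ)` of the flow `g(·;θ)` at `y`, as a continuous linear map. -/
noncomputable def Jg {q D : ℕ}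
    (g : EuclideanSpace ℝ (Fin q) → EuclideanSpace ℝ (Fin D) → EuclideanSpace ℝ (Fin D))
    (θ : EuclideanSpace ℝ (Fin q)) (y : EuclideanSpace ℝ (Fin D)) :
    EuclideanSpace ℝ (Fin D) →L[ℝ] EuclideanSpace ℝ (Fin D) :=
  fderiv ℝ (g θ) y

/-- The partial derivative `∂_i J_g(y;θ)` of the Jacobian in the `i`-th coordinate. -/
noncomputable def dJg {q D : ℕ}
    (g : EuclideanSpace ℝ (Fin q) → EuclideanSpace ℝ (Fin D) → EuclideanSpace ℝ (Fin D))
    (θ : EuclideanSpace ℝ (Fin q)) (i : Fin D) (y : EuclideanSpace ℝ (Fin D)) :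
    EuclideanSpace ℝ (Fin D) →L[ℝ] EuclideanSpace ℝ (Fin D) :=
  fderiv ℝ (Jg g θ) y (EuclideanSpace.single i 1)

/-- The second partial derivative `∂_i ∂_j J_g(y;θ)` of the Jacobian. -/
noncomputable def ddJg {q D : ℕ}
    (g : EuclideanSpace ℝ (Fin q) → EuclideanSpace ℝ (Fin D) → EuclideanSpace ℝ (Fin D))
    (θ : EuclideanSpace ℝ (Fin q)) (i j : Fin D) (y : EuclideanSpace ℝ (Fin D)) :
    EuclideanSpace ℝ (Fin D) →L[ℝ] EuclideanSpace ℝ (Fin D) :=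
  fderiv ℝ (fun z => dJg g θ i z) y (EuclideanSpace.single j 1)

/-- The inverse `J_g(y;θ)⁻¹` of the Jacobian (in the ring of continuous linear maps). -/
noncomputable def JgInv {q D : ℕ}
    (g : EuclideanSpace ℝ (Fin q) → EuclideanSpace ℝ (Fin D) → EuclideanSpace ℝ (Fin D))
    (θ : EuclideanSpace ℝ (Fin q)) (y : EuclideanSpace ℝ (Fin D)) :
    EuclideanSpace ℝ (Fin D) →L[ℝ] EuclideanSpace ℝ (Fin D) :=
  Ring.inverse (Jg g θ y)

/-- The partial derivative `∂_i (J_g⁻¹)(y;θ)` of the inverse Jacobian. -/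
noncomputable def dJgInv {q D : ℕ}
    (g : EuclideanSpace ℝ (Fin q) → EuclideanSpace ℝ (Fin D) → EuclideanSpace ℝ (Fin D))
    (θ : EuclideanSpace ℝ (Fin q)) (i : Fin D) (y : EuclideanSpace ℝ (Fin D)) :
    EuclideanSpace ℝ (Fin D) →L[ℝ] EuclideanSpace ℝ (Fin D) :=
  fderiv ℝ (fun z => JgInv g θ z) y (EuclideanSpace.single i 1)

/-- The vector `v(y;θ)` with components `v_i = tr(J_g(y;θ)⁻¹ · ∂_i J_g(y;θ))`
(the gradient of `log|det J_g|` by Jacobi's formula). -/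
noncomputable def vvec {q D : ℕ}
    (g : EuclideanSpace ℝ (Fin q) → EuclideanSpace ℝ (Fin D) → EuclideanSpace ℝ (Fin D))
    (θ : EuclideanSpace ℝ (Fin q)) (y : EuclideanSpace ℝ (Fin D)) :
    EuclideanSpace ℝ (Fin D) :=
  ∑ i, (LinearMap.trace ℝ (EuclideanSpace ℝ (Fin D))
      (JgInv g θ y * dJg g θ i y).toLinearMap) • EuclideanSpace.single i (1 : ℝ)

/-- The score `s(y;θ) = J_g(y;θ)ᵀ · s_u(g(y;θ)) + v(y;θ)` of the flow model. -/
noncomputable def score {q D : ℕ}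
    (g : EuclideanSpace ℝ (Fin q) → EuclideanSpace ℝ (Fin D) → EuclideanSpace ℝ (Fin D))
    (su : EuclideanSpace ℝ (Fin D) → EuclideanSpace ℝ (Fin D))
    (θ : EuclideanSpace ℝ (Fin q)) (y : EuclideanSpace ℝ (Fin D)) :
    EuclideanSpace ℝ (Fin D) :=
  ContinuousLinearMap.adjoint (Jg g θ y) (su (g θ y)) + vvec g θ y

/-- The pointwise score-matching objective `f(y;θ) = ½‖s(y;θ)‖² + tr(∂s(y;θ)/∂y)`. -/
noncomputable def fobj {q D : ℕ}
    (g : EuclideanSpace ℝ (Fin q) → EuclideanSpace ℝ (Fin D) → EuclideanSpace ℝ (Fin D))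
    (su : EuclideanSpace ℝ (Fin D) → EuclideanSpace ℝ (Fin D))
    (θ : EuclideanSpace ℝ (Fin q)) (y : EuclideanSpace ℝ (Fin D)) : ℝ :=
  (1 / 2) * ‖score g su θ y‖ ^ 2 +
    LinearMap.trace ℝ (EuclideanSpace ℝ (Fin D))
      (fderiv ℝ (fun z => score g su θ z) y).toLinearMap

section BoundedLipschitzOn

variable {α 𝕜 E F G : Type*} [PseudoMetricSpace α] [NontriviallyNormedField 𝕜]
  [SeminormedAddCommGroup E] [NormedSpace 𝕜 E] [SeminormedAddCommGroup F] [NormedSpace 𝕜 F]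
  [SeminormedAddCommGroup G] [NormedSpace 𝕜 G] {s : Set α}

def BoundedLipschitzOn (f : α → E) (s : Set α) : Prop :=
  ∃ C K : ℝ, (∀ a ∈ s, ‖f a‖ ≤ C) ∧ ∀ a ∈ s, ∀ b ∈ s, ‖f a - f b‖ ≤ K * dist a b

namespace BoundedLipschitzOn

theorem exists_nonneg_norm_sub_le {f : α → E} (hf : BoundedLipschitzOn f s) :
    ∃ L, 0 ≤ L ∧ ∀ a ∈ s, ∀ b ∈ s, ‖f a - f b‖ ≤ L * dist a b := by
  obtain ⟨_, K, -, hK⟩ := hf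
  exact ⟨max K 0, le_max_right _ _, fun a ha b hb =>
    (hK a ha b hb).trans (mul_le_mul_of_nonneg_right (le_max_left _ _) dist_nonneg)⟩

theorem congr {f f' : α → E} (hf : BoundedLipschitzOn f s) (h : Set.EqOn f f' s) :
    BoundedLipschitzOn f' s := by
  obtain ⟨C, K, hC, hK⟩ := hf
  exact ⟨C, K, fun a ha => h ha ▸ hC a ha, fun a ha b hb => h ha ▸ h hb ▸ hK a ha b hb⟩

theorem const (e : E) : BoundedLipschitzOn (fun _ : α => e) s :=
  ⟨‖e‖, 0, fun _ _ => le_rfl, fun _ _ _ _ => by simp⟩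

theorem add {f f' : α → E} (hf : BoundedLipschitzOn f s) (hf' : BoundedLipschitzOn f' s) :
    BoundedLipschitzOn (fun a => f a + f' a) s := by
  obtain ⟨C, K, hC, hK⟩ := hf
  obtain ⟨C', K', hC', hK'⟩ := hf'
  refine ⟨C + C', K + K', fun a ha => (norm_add_le _ _).trans (add_le_add (hC a ha) (hC' a ha)),
    fun a ha b hb => ?_⟩
  calc ‖f a + f' a - (f b + f' b)‖ = ‖(f a - f b) + (f' a - f' b)‖ := by rw [add_sub_add_comm]
    _ ≤ K * dist a b + K' * dist a b := norm_add_le_of_le (hK a ha b hb) (hK' a ha b hb)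
    _ = (K + K') * dist a b := by ring

theorem sum {ι : Type*} {f : ι → α → E} (t : Finset ι)
    (hf : ∀ i ∈ t, BoundedLipschitzOn (f i) s) :
    BoundedLipschitzOn (fun a => ∑ i ∈ t, f i a) s := by
  classical
  induction t using Finset.induction_on with
  | empty => simpa using const (s := s) (0 : E)
  | insert i t hi ih =>
    simp only [Finset.sum_insert hi]
    exact (hf i (t.mem_insert_self i)).add (ih fun j hj => hf j (Finset.mem_insert_of_mem hj))

theorem bilinear (B : E →L[𝕜] F →L[𝕜] G) {u : α → E} {v : α → F}
    (hu : BoundedLipschitzOn u s) (hv : BoundedLipschitzOn v s) :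
    BoundedLipschitzOn (fun a => B (u a) (v a)) s := by
  obtain ⟨Cu, Ku, hCu, hKu⟩ := hu
  obtain ⟨Cv, Kv, hCv, hKv⟩ := hv
  refine ⟨‖B‖ * Cu * Cv, ‖B‖ * (Ku * Cv + Cu * Kv), fun a ha => ?_, fun a ha b hb => ?_⟩ <;>
    have hCu0 : 0 ≤ Cu := (norm_nonneg _).trans (hCu a ha)
  · exact (B.le_opNorm₂ _ _).trans (by gcongr <;> [exact hCu a ha; exact hCv a ha])
  have hdu := hKu a ha b hb
  have hdv := hKv a ha b hb
  calc ‖B (u a) (v a) - B (u b) (v b)‖ = ‖B (u a - u b) (v a) + B (u b) (v a - v b)‖ := by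
        simp only [map_sub, sub_apply]; abel_nf
    _ ≤ ‖B‖ * ‖u a - u b‖ * ‖v a‖ + ‖B‖ * ‖u b‖ * ‖v a - v b‖ :=
        norm_add_le_of_le (B.le_opNorm₂ _ _) (B.le_opNorm₂ _ _)
    _ ≤ ‖B‖ * (Ku * dist a b) * Cv + ‖B‖ * Cu * (Kv * dist a b) := by
        gcongr
        · exact mul_nonneg (norm_nonneg B) ((norm_nonneg _).trans hdu)
        · exact hCv a ha
        · exact hCu b hb
    _ = ‖B‖ * (Ku * Cv + Cu * Kv) * dist a b := by ring

theorem clm_apply {T : α → E →L[𝕜] F} {v : α → E} (hT : BoundedLipschitzOn T s)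
    (hv : BoundedLipschitzOn v s) : BoundedLipschitzOn (fun a => T a (v a)) s :=
  bilinear (ContinuousLinearMap.apply 𝕜 F) hv hT

theorem mul {R : Type*} [SeminormedRing R] [NormedAlgebra 𝕜 R] {f f' : α → R}
    (hf : BoundedLipschitzOn f s) (hf' : BoundedLipschitzOn f' s) :
    BoundedLipschitzOn (fun a => f a * f' a) s :=
  bilinear (ContinuousLinearMap.mul 𝕜 R) hf hf'

theorem smul {c : α → 𝕜} {v : α → E} (hc : BoundedLipschitzOn c s)
    (hv : BoundedLipschitzOn v s) : BoundedLipschitzOn (fun a => c a • v a) s :=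
  bilinear (ContinuousLinearMap.lsmul 𝕜 𝕜) hc hv

theorem inner {H : Type*} [NormedAddCommGroup H] [InnerProductSpace ℝ H] {u v : α → H}
    (hu : BoundedLipschitzOn u s) (hv : BoundedLipschitzOn v s) :
    BoundedLipschitzOn (fun a => inner ℝ (u a) (v a)) s :=
  bilinear (innerSL ℝ) hu hv

theorem norm_sq {H : Type*} [NormedAddCommGroup H] [InnerProductSpace ℝ H] {v : α → H}
    (hv : BoundedLipschitzOn v s) : BoundedLipschitzOn (fun a => ‖v a‖ ^ 2) s := by
  simpa only [real_inner_self_eq_norm_sq] using hv.inner hv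

end BoundedLipschitzOn

theorem LipschitzWith.boundedLipschitzOn_comp {φ : E → F} {u : α → E} {C : ℝ} {K Ku : NNReal}
    (hφ : LipschitzWith K φ) (hφC : ∀ e, ‖φ e‖ ≤ C) (hu : LipschitzOnWith Ku u s) :
    BoundedLipschitzOn (fun a => φ (u a)) s :=
  ⟨C, K * Ku, fun _ _ => hφC _, fun a ha b hb => by
    rw [← dist_eq_norm]; exact_mod_cast (hφ.comp_lipschitzOnWith hu).dist_le_mul a ha b hb⟩

end BoundedLipschitzOn

section Adjoint

variable {V E F : Type*} [NormedAddCommGroup V] [NormedSpace ℝ V]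
  [NormedAddCommGroup E] [InnerProductSpace ℝ E] [CompleteSpace E]
  [NormedAddCommGroup F] [InnerProductSpace ℝ F] [CompleteSpace F]

-- Over `ℝ` the adjoint is linear, not just conjugate-linear: `starRingEnd ℝ` is `RingHom.id ℝ`
-- by `rfl`.
noncomputable def ContinuousLinearMap.adjointL : (E →L[ℝ] F) →L[ℝ] (F →L[ℝ] E) :=
  (ContinuousLinearMap.adjoint (𝕜 := ℝ)).toContinuousLinearEquiv.toContinuousLinearMap

open ContinuousLinearMap

@[simp]
theorem ContinuousLinearMap.adjointL_apply (T : E →L[ℝ] F) : adjointL T = adjoint T := rfl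

theorem BoundedLipschitzOn.adjoint_apply {α : Type*} [PseudoMetricSpace α] {s : Set α}
    {T : α → E →L[ℝ] F} {v : α → F} (hT : BoundedLipschitzOn T s)
    (hv : BoundedLipschitzOn v s) : BoundedLipschitzOn (fun a => adjoint (T a) (v a)) s := by
  simpa only [adjointL_apply] using ((const adjointL).clm_apply hT).clm_apply hv

theorem DifferentiableAt.adjoint_apply {J : V → E →L[ℝ] F} {u : V → F} {y : V}
    (hJ : DifferentiableAt ℝ J y) (hu : DifferentiableAt ℝ u y) :
    DifferentiableAt ℝ (fun z => adjoint (J z) (u z)) y :=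
  (adjointL.differentiableAt.comp y hJ).clm_apply hu

theorem fderiv_adjoint_apply {J : V → E →L[ℝ] F} {u : V → F} {y : V}
    (hJ : DifferentiableAt ℝ J y) (hu : DifferentiableAt ℝ u y) (h : V) :
    fderiv ℝ (fun z => adjoint (J z) (u z)) y h
      = adjoint (fderiv ℝ J y h) (u y) + adjoint (J y) (fderiv ℝ u y h) := by
  have hA : HasFDerivAt (fun z => adjointL (J z)) (adjointL.comp (fderiv ℝ J y)) y :=
    (adjointL (E := E) (F := F)).hasFDerivAt.comp y hJ.hasFDerivAt
  rw [show (fun z => adjoint (J z) (u z)) = fun z => adjointL (J z) (u z) from rfl,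
    fderiv_clm_apply hA.differentiableAt hu, hA.fderiv]
  simp [add_comm]

end Adjoint

section Trace

variable {𝕜 V E : Type*} [NontriviallyNormedField 𝕜] [CompleteSpace 𝕜]
  [NormedAddCommGroup V] [NormedSpace 𝕜 V]
  [NormedAddCommGroup E] [NormedSpace 𝕜 E] [FiniteDimensional 𝕜 E]

variable (𝕜 E) in
noncomputable def ContinuousLinearMap.traceL : (E →L[𝕜] E) →L[𝕜] 𝕜 :=
  LinearMap.toContinuousLinearMap (LinearMap.trace 𝕜 E ∘ₗ ContinuousLinearMap.coeLM 𝕜)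

open ContinuousLinearMap

@[simp]
theorem ContinuousLinearMap.traceL_apply (T : E →L[𝕜] E) :
    traceL 𝕜 E T = LinearMap.trace 𝕜 E T := rfl

theorem fderiv_traceL_mul {A B : V → E →L[𝕜] E} {y : V}
    (hA : DifferentiableAt 𝕜 A y) (hB : DifferentiableAt 𝕜 B y) (h : V) :
    fderiv 𝕜 (fun z => traceL 𝕜 E (A z * B z)) y h
      = traceL 𝕜 E (fderiv 𝕜 A y h * B y) + traceL 𝕜 E (A y * fderiv 𝕜 B y h) := by
  have hAB : HasFDerivAt (fun z => traceL 𝕜 E (A z * B z)) _ y :=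
    (traceL 𝕜 E).hasFDerivAt.comp y (hA.hasFDerivAt.mul' hB.hasFDerivAt)
  rw [hAB.fderiv, comp_apply, add_apply, map_add, add_comm]
  rfl

end Trace

section Flow

open ContinuousLinearMap EuclideanSpace

variable {q D : ℕ}
  {g : EuclideanSpace ℝ (Fin q) → EuclideanSpace ℝ (Fin D) → EuclideanSpace ℝ (Fin D)}
  {su : EuclideanSpace ℝ (Fin D) → EuclideanSpace ℝ (Fin D)}
  {θ : EuclideanSpace ℝ (Fin q)} {y : EuclideanSpace ℝ (Fin D)}

-- `∂ᵢs(y;θ)`: product and chain rule on `J_gᵀ s_u(g)`, and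
-- `∂ᵢ tr(J_g⁻¹ ∂ⱼJ_g) = tr(∂ᵢ(J_g⁻¹) ∂ⱼJ_g) + tr(J_g⁻¹ ∂ᵢ∂ⱼJ_g)`; see `fderiv_score_apply_single`.
noncomputable def scorePartial
    (g : EuclideanSpace ℝ (Fin q) → EuclideanSpace ℝ (Fin D) → EuclideanSpace ℝ (Fin D))
    (su : EuclideanSpace ℝ (Fin D) → EuclideanSpace ℝ (Fin D))
    (θ : EuclideanSpace ℝ (Fin q)) (i : Fin D) (y : EuclideanSpace ℝ (Fin D)) :
    EuclideanSpace ℝ (Fin D) :=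
  adjoint (dJg g θ i y) (su (g θ y))
    + adjoint (Jg g θ y) (fderiv ℝ su (g θ y) (Jg g θ y (single i 1)))
    + ∑ j, (traceL ℝ _ (dJgInv g θ i y * dJg g θ j y)
        + traceL ℝ _ (JgInv g θ y * ddJg g θ j i y)) • single j 1

theorem differentiable_Jg (hg : ContDiff ℝ 3 (g θ)) : Differentiable ℝ (Jg g θ) :=
  (hg.fderiv_right (m := 2) le_rfl).differentiable (by norm_num)

theorem differentiable_dJg (hg : ContDiff ℝ 3 (g θ)) (i : Fin D) :
    Differentiable ℝ (dJg g θ i) :=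
  (((hg.fderiv_right (m := 2) le_rfl).fderiv_right (m := 1) le_rfl).clm_apply
    contDiff_const).differentiable one_ne_zero

theorem differentiableAt_JgInv (hg : ContDiff ℝ 3 (g θ)) (hJ : IsUnit (Jg g θ y)) :
    DifferentiableAt ℝ (JgInv g θ) y :=
  (differentiable_Jg hg y).inverse hJ

theorem differentiableAt_traceL_JgInv_mul_dJg (hg : ContDiff ℝ 3 (g θ))
    (hJ : IsUnit (Jg g θ y)) (j : Fin D) :
    DifferentiableAt ℝ (fun z => traceL ℝ _ (JgInv g θ z * dJg g θ j z)) y :=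
  (traceL ℝ (EuclideanSpace ℝ (Fin D))).differentiableAt.comp y
    ((differentiableAt_JgInv hg hJ).mul (differentiable_dJg hg j y))

theorem differentiableAt_vvec (hg : ContDiff ℝ 3 (g θ)) (hJ : IsUnit (Jg g θ y)) :
    DifferentiableAt ℝ (vvec g θ) y :=
  DifferentiableAt.fun_sum fun j _ => (differentiableAt_traceL_JgInv_mul_dJg hg hJ j).smul_const _

theorem fderiv_vvec_apply_single (hg : ContDiff ℝ 3 (g θ)) (hJ : IsUnit (Jg g θ y))
    (i : Fin D) :
    fderiv ℝ (vvec g θ) y (single i 1)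
      = ∑ j, (traceL ℝ _ (dJgInv g θ i y * dJg g θ j y)
          + traceL ℝ _ (JgInv g θ y * ddJg g θ j i y)) • single j (1 : ℝ) := by
  have hc := differentiableAt_traceL_JgInv_mul_dJg hg hJ
  rw [show vvec g θ = fun z => ∑ j, traceL ℝ _ (JgInv g θ z * dJg g θ j z) • single j 1 from rfl,
    fderiv_fun_sum fun j _ => (hc j).smul_const _, sum_apply]
  refine Finset.sum_congr rfl fun j _ => ?_
  rw [fderiv_smul_const (hc j), smulRight_apply,
    fderiv_traceL_mul (differentiableAt_JgInv hg hJ) (differentiable_dJg hg j y)]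
  rfl

theorem fderiv_score_apply_single (hg : ContDiff ℝ 3 (g θ)) (hJ : IsUnit (Jg g θ y))
    (hsu : DifferentiableAt ℝ su (g θ y)) (i : Fin D) :
    fderiv ℝ (score g su θ) y (single i 1) = scorePartial g su θ i y := by
  have hsug : DifferentiableAt ℝ (fun z => su (g θ z)) y :=
    hsu.comp y ((hg.differentiable (by norm_num)) y)
  rw [show score g su θ = fun z => adjoint (Jg g θ z) (su (g θ z)) + vvec g θ z from rfl,
    fderiv_fun_add ((differentiable_Jg hg y).adjoint_apply hsug) (differentiableAt_vvec hg hJ),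
    add_apply, fderiv_adjoint_apply (differentiable_Jg hg y) hsug,
    fderiv_fun_comp y hsu ((hg.differentiable (by norm_num)) y), fderiv_vvec_apply_single hg hJ]
  rfl

theorem fobj_eq_sum_inner_scorePartial (hg : ContDiff ℝ 3 (g θ)) (hJ : IsUnit (Jg g θ y))
    (hsu : DifferentiableAt ℝ su (g θ y)) :
    fobj g su θ y
      = 1 / 2 * ‖score g su θ y‖ ^ 2 + ∑ i, inner ℝ (single i 1) (scorePartial g su θ i y) := by
  rw [fobj, LinearMap.trace_eq_sum_inner _ (EuclideanSpace.basisFun (Fin D) ℝ)]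
  simp only [EuclideanSpace.basisFun_apply, coe_coe, fderiv_score_apply_single hg hJ hsu]

variable {Θ : Set (EuclideanSpace ℝ (Fin q))} {x : EuclideanSpace ℝ (Fin D)}

theorem boundedLipschitzOn_vvec (hJinv : BoundedLipschitzOn (fun θ => JgInv g θ x) Θ)
    (hdJ : ∀ i, BoundedLipschitzOn (fun θ => dJg g θ i x) Θ) :
    BoundedLipschitzOn (fun θ => vvec g θ x) Θ := by
  show BoundedLipschitzOn
    (fun θ => ∑ j, traceL ℝ _ (JgInv g θ x * dJg g θ j x) • single j (1 : ℝ)) Θ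
  exact .sum _ fun j _ =>
    ((BoundedLipschitzOn.const (traceL ℝ (EuclideanSpace ℝ (Fin D)))).clm_apply
      (hJinv.mul (𝕜 := ℝ) (hdJ j))).smul (.const _)

theorem boundedLipschitzOn_score (hJ : BoundedLipschitzOn (fun θ => Jg g θ x) Θ)
    (hdJ : ∀ i, BoundedLipschitzOn (fun θ => dJg g θ i x) Θ)
    (hJinv : BoundedLipschitzOn (fun θ => JgInv g θ x) Θ)
    (hsu : BoundedLipschitzOn (fun θ => su (g θ x)) Θ) :
    BoundedLipschitzOn (fun θ => score g su θ x) Θ :=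
  (hJ.adjoint_apply hsu).add (boundedLipschitzOn_vvec hJinv hdJ)

theorem boundedLipschitzOn_scorePartial (hJ : BoundedLipschitzOn (fun θ => Jg g θ x) Θ)
    (hdJ : ∀ i, BoundedLipschitzOn (fun θ => dJg g θ i x) Θ)
    (hddJ : ∀ i j, BoundedLipschitzOn (fun θ => ddJg g θ i j x) Θ)
    (hJinv : BoundedLipschitzOn (fun θ => JgInv g θ x) Θ)
    (hdJinv : ∀ i, BoundedLipschitzOn (fun θ => dJgInv g θ i x) Θ)
    (hsu : BoundedLipschitzOn (fun θ => su (g θ x)) Θ)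
    (hDsu : BoundedLipschitzOn (fun θ => fderiv ℝ su (g θ x)) Θ) (i : Fin D) :
    BoundedLipschitzOn (fun θ => scorePartial g su θ i x) Θ := by
  have htr := fun {T : EuclideanSpace ℝ (Fin q) → _} (hT : BoundedLipschitzOn T Θ) =>
    (BoundedLipschitzOn.const (traceL ℝ (EuclideanSpace ℝ (Fin D)))).clm_apply hT
  refine (((hdJ i).adjoint_apply hsu).add (hJ.adjoint_apply
    (hDsu.clm_apply (hJ.clm_apply (.const _))))).add (.sum _ fun j _ => ?_)
  exact ((htr ((hdJinv i).mul (𝕜 := ℝ) (hdJ j))).add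
    (htr (hJinv.mul (𝕜 := ℝ) (hddJ j i)))).smul (.const _)

theorem boundedLipschitzOn_fobj (hg : ∀ θ ∈ Θ, ContDiff ℝ 3 (g θ))
    (hJunit : ∀ θ ∈ Θ, IsUnit (Jg g θ x)) (hsu : Differentiable ℝ su)
    (hJ : BoundedLipschitzOn (fun θ => Jg g θ x) Θ)
    (hdJ : ∀ i, BoundedLipschitzOn (fun θ => dJg g θ i x) Θ)
    (hddJ : ∀ i j, BoundedLipschitzOn (fun θ => ddJg g θ i j x) Θ)
    (hJinv : BoundedLipschitzOn (fun θ => JgInv g θ x) Θ)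
    (hdJinv : ∀ i, BoundedLipschitzOn (fun θ => dJgInv g θ i x) Θ)
    (hsug : BoundedLipschitzOn (fun θ => su (g θ x)) Θ)
    (hDsug : BoundedLipschitzOn (fun θ => fderiv ℝ su (g θ x)) Θ) :
    BoundedLipschitzOn (fun θ => fobj g su θ x) Θ := by
  have hs := boundedLipschitzOn_score hJ hdJ hJinv hsug
  have hP := boundedLipschitzOn_scorePartial hJ hdJ hddJ hJinv hdJinv hsug hDsug
  refine BoundedLipschitzOn.congr ?_ fun θ hθ =>
    (fobj_eq_sum_inner_scorePartial (hg θ hθ) (hJunit θ hθ) (hsu _)).symm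
  exact ((BoundedLipschitzOn.const (1 / 2 : ℝ)).mul (𝕜 := ℝ) hs.norm_sq).add
    (.sum _ fun i _ => (BoundedLipschitzOn.const _).inner (hP i))

end Flow

theorem stmt_11_general {D q : ℕ}
    (Θ : Set (EuclideanSpace ℝ (Fin q)))
    (x : EuclideanSpace ℝ (Fin D))
    (g : EuclideanSpace ℝ (Fin q) → EuclideanSpace ℝ (Fin D) → EuclideanSpace ℝ (Fin D))
    (hg : ∀ θ ∈ Θ, ContDiff ℝ 3 (g θ))
    (hJunit : ∀ θ ∈ Θ, ∀ y, IsUnit (Jg g θ y))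
    (su : EuclideanSpace ℝ (Fin D) → EuclideanSpace ℝ (Fin D))
    (hsu : ContDiff ℝ 1 su)
    (l1 l2 l3 l1' l2' r0 r1 r2 r3 r1' r2' : EuclideanSpace ℝ (Fin D) → ℝ)
    (t1 t2 t3 t4 : ℝ)
    (hb_l1 : ∀ θ ∈ Θ, ∀ y, ‖Jg g θ y‖ ≤ l1 y)
    (hb_l2 : ∀ θ ∈ Θ, ∀ i : Fin D, ∀ y, ‖dJg g θ i y‖ ≤ l2 y)
    (hb_l3 : ∀ θ ∈ Θ, ∀ i j : Fin D, ∀ y, ‖ddJg g θ i j y‖ ≤ l3 y)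
    (hb_r0 : ∀ θ1 ∈ Θ, ∀ θ2 ∈ Θ, ∀ y, ‖g θ1 y - g θ2 y‖ ≤ r0 y * ‖θ1 - θ2‖)
    (hb_r1 : ∀ θ1 ∈ Θ, ∀ θ2 ∈ Θ, ∀ y, ‖Jg g θ1 y - Jg g θ2 y‖ ≤ r1 y * ‖θ1 - θ2‖)
    (hb_r2 : ∀ θ1 ∈ Θ, ∀ θ2 ∈ Θ, ∀ i : Fin D, ∀ y,
      ‖dJg g θ1 i y - dJg g θ2 i y‖ ≤ r2 y * ‖θ1 - θ2‖)
    (hb_r3 : ∀ θ1 ∈ Θ, ∀ θ2 ∈ Θ, ∀ i j : Fin D, ∀ y,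
      ‖ddJg g θ1 i j y - ddJg g θ2 i j y‖ ≤ r3 y * ‖θ1 - θ2‖)
    (hb_l1' : ∀ θ ∈ Θ, ∀ y, ‖JgInv g θ y‖ ≤ l1' y)
    (hb_l2' : ∀ θ ∈ Θ, ∀ i : Fin D, ∀ y, ‖dJgInv g θ i y‖ ≤ l2' y)
    (hb_r1' : ∀ θ1 ∈ Θ, ∀ θ2 ∈ Θ, ∀ y,
      ‖JgInv g θ1 y - JgInv g θ2 y‖ ≤ r1' y * ‖θ1 - θ2‖)
    (hb_r2' : ∀ θ1 ∈ Θ, ∀ θ2 ∈ Θ, ∀ i : Fin D, ∀ y,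
      ‖dJgInv g θ1 i y - dJgInv g θ2 i y‖ ≤ r2' y * ‖θ1 - θ2‖)
    (hb_t1 : ∀ u, ‖su u‖ ≤ t1)
    (hb_t2 : ∀ u, ‖fderiv ℝ su u‖ ≤ t2)
    (hb_t3 : ∀ u1 u2, ‖su u1 - su u2‖ ≤ t3 * ‖u1 - u2‖)
    (hb_t4 : ∀ u1 u2, ‖fderiv ℝ su u1 - fderiv ℝ su u2‖ ≤ t4 * ‖u1 - u2‖) :
    ∃ L : ℝ, 0 ≤ L ∧ ∀ θ1 ∈ Θ, ∀ θ2 ∈ Θ,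
      |fobj g su θ1 x - fobj g su θ2 x| ≤ L * ‖θ1 - θ2‖ := by
  have hgx : LipschitzOnWith (r0 x).toNNReal (fun θ => g θ x) Θ :=
    .of_dist_le' fun θ1 h1 θ2 h2 => by simpa only [dist_eq_norm] using hb_r0 θ1 h1 θ2 h2 x
  have hsug := (LipschitzWith.of_dist_le' fun u1 u2 => by
    simpa only [dist_eq_norm] using hb_t3 u1 u2).boundedLipschitzOn_comp hb_t1 hgx
  have hDsug := (LipschitzWith.of_dist_le' fun u1 u2 => by
    simpa only [dist_eq_norm] using hb_t4 u1 u2).boundedLipschitzOn_comp hb_t2 hgx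
  obtain ⟨L, hL0, hL⟩ := (boundedLipschitzOn_fobj hg (fun θ hθ => hJunit θ hθ x)
    (hsu.differentiable one_ne_zero)
    ⟨_, _, fun θ hθ => hb_l1 θ hθ x, fun θ1 h1 θ2 h2 => by
      rw [dist_eq_norm]; exact hb_r1 θ1 h1 θ2 h2 x⟩
    (fun i => ⟨_, _, fun θ hθ => hb_l2 θ hθ i x, fun θ1 h1 θ2 h2 => by
      rw [dist_eq_norm]; exact hb_r2 θ1 h1 θ2 h2 i x⟩)
    (fun i j => ⟨_, _, fun θ hθ => hb_l3 θ hθ i j x, fun θ1 h1 θ2 h2 => by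
      rw [dist_eq_norm]; exact hb_r3 θ1 h1 θ2 h2 i j x⟩)
    ⟨_, _, fun θ hθ => hb_l1' θ hθ x, fun θ1 h1 θ2 h2 => by
      rw [dist_eq_norm]; exact hb_r1' θ1 h1 θ2 h2 x⟩
    (fun i => ⟨_, _, fun θ hθ => hb_l2' θ hθ i x, fun θ1 h1 θ2 h2 => by
      rw [dist_eq_norm]; exact hb_r2' θ1 h1 θ2 h2 i x⟩)
    hsug hDsug).exists_nonneg_norm_sub_le
  exact ⟨L, hL0, fun θ1 h1 θ2 h2 => by
    simpa only [Real.norm_eq_abs, dist_eq_norm] using hL θ1 h1 θ2 h2⟩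

/-- **Proposition A (prop:lip_f).** Under boundedness and θ-Lipschitz assumptions on
the flow `g`, its Jacobian, the inverse Jacobian and their spatial derivatives, and
boundedness/Lipschitz assumptions on the prior score `s_u` and its derivative, the
pointwise score-matching objective `θ ↦ f(x;θ)` is Lipschitz continuous on `Θ`. -/
theorem stmt_11 {D q : ℕ} (hD : 1 ≤ D) (hq : 1 ≤ q)
    (Θ : Set (EuclideanSpace ℝ (Fin q)))
    (x : EuclideanSpace ℝ (Fin D))
    (g : EuclideanSpace ℝ (Fin q) → EuclideanSpace ℝ (Fin D) → EuclideanSpace ℝ (Fin D))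
    (hg : ∀ θ ∈ Θ, ContDiff ℝ 3 (g θ))
    (hJunit : ∀ θ ∈ Θ, ∀ y, IsUnit (Jg g θ y))
    (su : EuclideanSpace ℝ (Fin D) → EuclideanSpace ℝ (Fin D))
    (hsu : ContDiff ℝ 1 su)
    (l1 l2 l3 l1' l2' r0 r1 r2 r3 r1' r2' : EuclideanSpace ℝ (Fin D) → ℝ)
    (t1 t2 t3 t4 : ℝ)
    (hl1 : ∀ y, 0 ≤ l1 y) (hl2 : ∀ y, 0 ≤ l2 y) (hl3 : ∀ y, 0 ≤ l3 y)
    (hl1' : ∀ y, 0 ≤ l1' y) (hl2' : ∀ y, 0 ≤ l2' y)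
    (hr0 : ∀ y, 0 ≤ r0 y) (hr1 : ∀ y, 0 ≤ r1 y) (hr2 : ∀ y, 0 ≤ r2 y)
    (hr3 : ∀ y, 0 ≤ r3 y) (hr1' : ∀ y, 0 ≤ r1' y) (hr2' : ∀ y, 0 ≤ r2' y)
    (ht1 : 0 ≤ t1) (ht2 : 0 ≤ t2) (ht3 : 0 ≤ t3) (ht4 : 0 ≤ t4)
    (hb_l1 : ∀ θ ∈ Θ, ∀ y, ‖Jg g θ y‖ ≤ l1 y)
    (hb_l2 : ∀ θ ∈ Θ, ∀ i : Fin D, ∀ y, ‖dJg g θ i y‖ ≤ l2 y)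
    (hb_l3 : ∀ θ ∈ Θ, ∀ i j : Fin D, ∀ y, ‖ddJg g θ i j y‖ ≤ l3 y)
    (hb_r0 : ∀ θ1 ∈ Θ, ∀ θ2 ∈ Θ, ∀ y, ‖g θ1 y - g θ2 y‖ ≤ r0 y * ‖θ1 - θ2‖)
    (hb_r1 : ∀ θ1 ∈ Θ, ∀ θ2 ∈ Θ, ∀ y, ‖Jg g θ1 y - Jg g θ2 y‖ ≤ r1 y * ‖θ1 - θ2‖)
    (hb_r2 : ∀ θ1 ∈ Θ, ∀ θ2 ∈ Θ, ∀ i : Fin D, ∀ y,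
      ‖dJg g θ1 i y - dJg g θ2 i y‖ ≤ r2 y * ‖θ1 - θ2‖)
    (hb_r3 : ∀ θ1 ∈ Θ, ∀ θ2 ∈ Θ, ∀ i j : Fin D, ∀ y,
      ‖ddJg g θ1 i j y - ddJg g θ2 i j y‖ ≤ r3 y * ‖θ1 - θ2‖)
    (hb_l1' : ∀ θ ∈ Θ, ∀ y, ‖JgInv g θ y‖ ≤ l1' y)
    (hb_l2' : ∀ θ ∈ Θ, ∀ i : Fin D, ∀ y, ‖dJgInv g θ i y‖ ≤ l2' y)
    (hb_r1' : ∀ θ1 ∈ Θ, ∀ θ2 ∈ Θ, ∀ y,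
      ‖JgInv g θ1 y - JgInv g θ2 y‖ ≤ r1' y * ‖θ1 - θ2‖)
    (hb_r2' : ∀ θ1 ∈ Θ, ∀ θ2 ∈ Θ, ∀ i : Fin D, ∀ y,
      ‖dJgInv g θ1 i y - dJgInv g θ2 i y‖ ≤ r2' y * ‖θ1 - θ2‖)
    (hb_t1 : ∀ u, ‖su u‖ ≤ t1)
    (hb_t2 : ∀ u, ‖fderiv ℝ su u‖ ≤ t2)
    (hb_t3 : ∀ u1 u2, ‖su u1 - su u2‖ ≤ t3 * ‖u1 - u2‖)
    (hb_t4 : ∀ u1 u2, ‖fderiv ℝ su u1 - fderiv ℝ su u2‖ ≤ t4 * ‖u1 - u2‖) :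
    ∃ L : ℝ, 0 ≤ L ∧ ∀ θ1 ∈ Θ, ∀ θ2 ∈ Θ,
      |fobj g su θ1 x - fobj g su θ2 x| ≤ L * ‖θ1 - θ2‖ :=
  stmt_11_general Θ x g hg hJunit su hsu l1 l2 l3 l1' l2' r0 r1 r2 r3 r1' r2' t1 t2 t3 t4 hb_l1
    hb_l2 hb_l3 hb_r0 hb_r1 hb_r2 hb_r3 hb_l1' hb_l2' hb_r1' hb_r2' hb_t1 hb_t2 hb_t3 hb_t4
end
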